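/- arXiv:2011.03067 — 5 statements merged into one kernel-verified Lean document; each statement's English description precedes it below -/
import Mathlib

section
/- For fixed d ≥ 2 and m = m(n) = (1/2)·C(n,d) (over n such that C(n,d) is even), the limit as n → ∞ of C(n, d-1) · C(2m - n + d - 1, m) / C(2m, m) equals 0; equivalently, the asymptotic density of m-element subsets of M(n,d) that are lower perfect tends to 1. -/
/-!
Write `m = C(n,d)/2` and `k = n - (d - 1)`, so that the middle factor is `C(2m - k, m)`.
Once `m ≥ n`, each unit decrease of the top index below `2m` at least halves `C(·, m)`, so
`C(2m - k, m) / C(2m, m) ≤ 2⁻ᵏ`. Together with `C(n, d-1) ≤ n^(d-1)` the quantity is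
`O(n^(d-1) 2⁻ⁿ)`, which tends to `0` along all `n`, in particular along those with `C(n,d)` even.
-/

open Filter

namespace Nat

theorem choose_le_choose_of_le_half {n k l : ℕ} (hkl : k ≤ l) (hl : l ≤ n / 2) :
    n.choose k ≤ n.choose l := by
  induction l, hkl using Nat.le_induction with
  | base => exact le_rfl
  | succ l _ ih => exact (ih (by omega)).trans (choose_le_succ_of_lt_half_left (by omega))

-- Past the middle `N.choose m ≤ N.choose (m - 1)`, so Pascal's rule at least doubles it.
theorem two_mul_choose_le_choose_succ {N m : ℕ} (h : N < 2 * m) :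
    2 * N.choose m ≤ (N + 1).choose m := by
  obtain ⟨j, rfl⟩ : ∃ j, m = j + 1 := ⟨m - 1, by omega⟩
  have hdesc : N.choose (j + 1) ≤ N.choose j := by
    refine Nat.le_of_mul_le_mul_right ?_ j.succ_pos
    calc N.choose (j + 1) * (j + 1) = N.choose j * (N - j) := choose_succ_right_eq N j
      _ ≤ N.choose j * (j + 1) := Nat.mul_le_mul_left _ (by omega)
  rw [choose_succ_succ']
  omega

theorem two_pow_mul_choose_sub_le {m k : ℕ} (hk : k ≤ m) :
    2 ^ k * (2 * m - k).choose m ≤ (2 * m).choose m := by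
  induction k with
  | zero => simp
  | succ k ih =>
    have hstep := two_mul_choose_le_choose_succ (N := 2 * m - (k + 1)) (m := m) (by omega)
    rw [show 2 * m - (k + 1) + 1 = 2 * m - k by omega] at hstep
    calc 2 ^ (k + 1) * (2 * m - (k + 1)).choose m
        = 2 ^ k * (2 * (2 * m - (k + 1)).choose m) := by ring
      _ ≤ 2 ^ k * (2 * m - k).choose m := Nat.mul_le_mul_left _ hstep
      _ ≤ (2 * m).choose m := ih (by omega)

theorem le_choose_div_two {n d : ℕ} (hd : 2 ≤ d) (hn : 2 * d + 1 ≤ n) :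
    n ≤ n.choose d / 2 := by
  have hchoose_two : n * (n - 1) / 2 ≤ n.choose d :=
    choose_two_right n ▸ choose_le_choose_of_le_half hd (by omega)
  have hquad : 4 * n ≤ n * (n - 1) := by
    have := Nat.mul_le_mul_left n (show 4 ≤ n - 1 by omega)
    omega
  omega

end Nat

theorem choose_sub_div_choose_le {m k : ℕ} (hk : k ≤ m) :
    ((2 * m - k).choose m : ℝ) / (2 * m).choose m ≤ (1 / 2) ^ k := by
  have hpos : (0 : ℝ) < (2 * m).choose m := by exact_mod_cast Nat.choose_pos (by omega)
  rw [div_le_iff₀ hpos, one_div, inv_pow, ← div_eq_inv_mul, le_div_iff₀ (by positivity), mul_comm]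
  exact_mod_cast Nat.two_pow_mul_choose_sub_le hk

theorem half_pow_sub {n k : ℕ} (hk : k ≤ n) :
    (1 / 2 : ℝ) ^ (n - k) = 2 ^ k * (1 / 2) ^ n := by
  rw [pow_sub₀ _ (by norm_num) hk]
  simp [mul_comm]

/-- For fixed `d ≥ 2` and `m = m(n) = (1/2)·C(n,d)`, along those `n` for which `C(n,d)`
is even, `C(n,d-1) · C(2m-n+d-1, m) / C(2m, m) → 0` as `n → ∞`; i.e., the asymptotic
density of `m`-element lower perfect subsets of `M(n,d)` tends to `1`. -/
theorem stmt2 (d : ℕ) (hd : 2 ≤ d) :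
    Tendsto
      (fun n : ℕ =>
        ((Nat.choose n (d - 1) : ℝ) *
            (Nat.choose (2 * (Nat.choose n d / 2) - n + d - 1) (Nat.choose n d / 2) : ℝ)) /
          (Nat.choose (2 * (Nat.choose n d / 2)) (Nat.choose n d / 2) : ℝ))
      (atTop ⊓ Filter.principal {n : ℕ | Even (Nat.choose n d)}) (nhds 0) := by
  have hlim : Tendsto (fun n : ℕ => 2 ^ (d - 1) * ((n : ℝ) ^ (d - 1) * (1 / 2) ^ n)) atTop
      (nhds 0) := by
    simpa using (tendsto_pow_const_mul_const_pow_of_lt_one (d - 1) (r := (1 / 2 : ℝ))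
      (by norm_num) (by norm_num)).const_mul (2 ^ (d - 1))
  refine (squeeze_zero' (Eventually.of_forall fun n => by positivity) ?_ hlim).mono_left
    inf_le_left
  filter_upwards [eventually_ge_atTop (2 * d + 1)] with n hn
  set m := n.choose d / 2
  have hnm : n ≤ m := Nat.le_choose_div_two hd hn
  rw [show 2 * m - n + d - 1 = 2 * m - (n - (d - 1)) by omega, mul_div_assoc]
  calc (n.choose (d - 1) : ℝ) * (((2 * m - (n - (d - 1))).choose m : ℝ) / (2 * m).choose m)
      ≤ (n : ℝ) ^ (d - 1) * (1 / 2) ^ (n - (d - 1)) := by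
        gcongr
        · exact_mod_cast Nat.choose_le_pow n (d - 1)
        · exact choose_sub_div_choose_le (by omega)
    _ = 2 ^ (d - 1) * ((n : ℝ) ^ (d - 1) * (1 / 2) ^ n) := by
        rw [half_pow_sub (by omega)]
        ring
end

section
/- Let n ≥ 9 with 3 | n, partition {1,...,n} into S_1, S_2, S_3 by residue mod 3 with |S_i| = n/3 each. Let G_1 be the set of 3-element subsets contained in some S_i, and G_2 the set of 3-element subsets with two elements in S_i and one in S_{i+1} (indices mod 3). Then every 2-element subset of {1,...,n} is contained in some element of G_1 ∪ G_2. -/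
open Finset

attribute [local instance] Classical.propDecidable

/-- `S_i ⊆ {1,…,n}`: the elements congruent to `i` mod 3. -/
noncomputable def resClass3 (n i : ℕ) : Finset ℕ :=
  (Finset.Icc 1 n).filter (fun x => x % 3 = i % 3)

/-- `G_1`: 3-element subsets of `{1,…,n}` contained in a single residue class mod 3. -/
noncomputable def G1deg3 (n : ℕ) : Finset (Finset ℕ) :=
  ((Finset.Icc 1 n).powersetCard 3).filter (fun T => ∃ i ∈ Finset.Icc 1 3, T ⊆ resClass3 n i)

/-- `G_2`: 3-element subsets with two elements in `S_i` and one in `S_{i+1}` (cyclically). -/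
noncomputable def G2deg3 (n : ℕ) : Finset (Finset ℕ) :=
  ((Finset.Icc 1 n).powersetCard 3).filter (fun T => ∃ i ∈ Finset.Icc 1 3,
    (T ∩ resClass3 n i).card = 2 ∧ (T ∩ resClass3 n (i + 1)).card = 1)

lemma memClass {n i x : ℕ} : x ∈ resClass3 n i ↔ (1 ≤ x ∧ x ≤ n) ∧ x % 3 = i % 3 := by
  simp [resClass3, Finset.mem_filter, Finset.mem_Icc]

lemma pick3 (n a b r : ℕ) (hn : 9 ≤ n) :
    ∃ c, 1 ≤ c ∧ c ≤ n ∧ c % 3 = r % 3 ∧ c ≠ a ∧ c ≠ b := by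
  set r' : ℕ := if r % 3 = 0 then 3 else r % 3 with hr'
  have h1 : 1 ≤ r' ∧ r' ≤ 3 ∧ r' % 3 = r % 3 := by
    have : r % 3 = 0 ∨ r % 3 = 1 ∨ r % 3 = 2 := by omega
    rcases this with h | h | h <;> simp [hr', h]
  by_cases h₁ : r' ≠ a ∧ r' ≠ b
  · exact ⟨r', h1.1, by omega, h1.2.2, h₁.1, h₁.2⟩
  by_cases h₂ : r' + 3 ≠ a ∧ r' + 3 ≠ b
  · exact ⟨r' + 3, by omega, by omega, by omega, h₂.1, h₂.2⟩
  · refine ⟨r' + 6, by omega, by omega, by omega, by omega, by omega⟩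

lemma tripleCard {a b c : ℕ} (hab : a ≠ b) (hac : a ≠ c) (hbc : b ≠ c) :
    ({a, b, c} : Finset ℕ).card = 3 := by
  rw [Finset.card_insert_of_notMem (by simp [hab, hac]),
    Finset.card_insert_of_notMem (by simp [hbc]), Finset.card_singleton]

lemma idxFacts (r : ℕ) :
    ∃ i, i ∈ Finset.Icc 1 3 ∧ i % 3 = r % 3 ∧ (i + 1) % 3 = (r + 1) % 3 := by
  refine ⟨if r % 3 = 0 then 3 else r % 3, ?_⟩
  have : r % 3 = 0 ∨ r % 3 = 1 ∨ r % 3 = 2 := by omega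
  rcases this with h | h | h <;> simp [h, Finset.mem_Icc] <;> omega

lemma key1 (n a b : ℕ) (hn : 9 ≤ n) (ha : 1 ≤ a ∧ a ≤ n) (hb : 1 ≤ b ∧ b ≤ n)
    (hab : a ≠ b) (hr : a % 3 = b % 3) : ∃ T ∈ G1deg3 n, ({a, b} : Finset ℕ) ⊆ T := by
  obtain ⟨c, hc1, hc2, hc3, hca, hcb⟩ := pick3 n a b a hn
  obtain ⟨i, hi, hi2, _⟩ := idxFacts a
  refine ⟨{a, b, c}, ?_, by intro x hx; simp at hx ⊢; tauto⟩
  simp only [G1deg3, Finset.mem_filter, Finset.mem_powersetCard]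
  refine ⟨⟨?_, tripleCard hab (Ne.symm hca) (Ne.symm hcb)⟩, i, hi, ?_⟩
  · intro x hx; simp at hx; rcases hx with h | h | h <;> subst h <;> simp [Finset.mem_Icc] <;> omega
  · intro x hx; simp at hx; rcases hx with h | h | h <;> subst h <;> rw [memClass] <;>
      refine ⟨by omega, by omega⟩

lemma key2 (n a b : ℕ) (hn : 9 ≤ n) (ha : 1 ≤ a ∧ a ≤ n) (hb : 1 ≤ b ∧ b ≤ n)
    (hab : a ≠ b) (hr : b % 3 = (a % 3 + 1) % 3) :
    ∃ T ∈ G2deg3 n, ({a, b} : Finset ℕ) ⊆ T := by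
  obtain ⟨c, hc1, hc2, hc3, hca, hcb⟩ := pick3 n a b a hn
  obtain ⟨i, hi, hi2, hi3⟩ := idxFacts a
  have hne : a % 3 ≠ b % 3 := by omega
  refine ⟨{a, b, c}, ?_, by intro x hx; simp at hx ⊢; tauto⟩
  simp only [G2deg3, Finset.mem_filter, Finset.mem_powersetCard]
  refine ⟨⟨?_, tripleCard hab (Ne.symm hca) (Ne.symm hcb)⟩, i, hi, ?_, ?_⟩
  · intro x hx; simp at hx; rcases hx with h | h | h <;> subst h <;> simp [Finset.mem_Icc] <;> omega
  · have : ({a, b, c} : Finset ℕ) ∩ resClass3 n i = {a, c} := by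
      ext x
      simp only [Finset.mem_inter, Finset.mem_insert, Finset.mem_singleton, memClass]
      constructor
      · rintro ⟨h | h | h, h2⟩ <;> subst h <;> first | tauto | omega
      · rintro (h | h) <;> subst h <;> refine ⟨by tauto, ⟨by omega, by omega⟩⟩
    rw [this, Finset.card_insert_of_notMem (Finset.notMem_singleton.mpr (Ne.symm hca)), Finset.card_singleton]
  · have : ({a, b, c} : Finset ℕ) ∩ resClass3 n (i + 1) = {b} := by
      ext x
      simp only [Finset.mem_inter, Finset.mem_insert, Finset.mem_singleton, memClass]
      constructor
      · rintro ⟨h | h | h, h2⟩ <;> subst h <;> first | rfl | omega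
      · rintro h; subst h; exact ⟨by tauto, ⟨by omega, by omega⟩⟩
    rw [this, Finset.card_singleton]

/-- Lower perfectness for the degree-3 algorithm: for `n ≥ 9` with `3 ∣ n`, every
2-element subset of `{1,…,n}` is contained in some element of `G_1 ∪ G_2`. -/
theorem stmt15 (n : ℕ) (hn : 9 ≤ n) (h3 : 3 ∣ n) :
    ∀ P ∈ (Finset.Icc 1 n).powersetCard 2, ∃ T ∈ G1deg3 n ∪ G2deg3 n, P ⊆ T := by
  intro P hP
  rw [Finset.mem_powersetCard] at hP
  obtain ⟨hPsub, hPcard⟩ := hP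
  obtain ⟨a, b, hab, rfl⟩ := Finset.card_eq_two.mp hPcard
  have ha : 1 ≤ a ∧ a ≤ n := by
    have := hPsub (by simp : a ∈ ({a, b} : Finset ℕ)); simpa [Finset.mem_Icc] using this
  have hb : 1 ≤ b ∧ b ≤ n := by
    have := hPsub (by simp : b ∈ ({a, b} : Finset ℕ)); simpa [Finset.mem_Icc] using this
  by_cases hr : a % 3 = b % 3
  · obtain ⟨T, hT, hsub⟩ := key1 n a b hn ha hb hab hr
    exact ⟨T, Finset.mem_union_left _ hT, hsub⟩
  · have h3a := Nat.mod_lt a (show 0 < 3 by norm_num)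
    have h3b := Nat.mod_lt b (show 0 < 3 by norm_num)
    by_cases hcase : b % 3 = (a % 3 + 1) % 3
    · obtain ⟨T, hT, hsub⟩ := key2 n a b hn ha hb hab hcase
      exact ⟨T, Finset.mem_union_right _ hT, hsub⟩
    · have hcase' : a % 3 = (b % 3 + 1) % 3 := by omega
      obtain ⟨T, hT, hsub⟩ := key2 n b a hn hb ha (Ne.symm hab) hcase'
      refine ⟨T, Finset.mem_union_right _ hT, ?_⟩
      rwa [Finset.pair_comm]
end

section
/- Let n ≥ 9 with 3 | n, partition {1,...,n} into S_1, S_2, S_3 by residue mod 3. Let G_1 be the 3-subsets contained in one S_i and G_2 the 3-subsets with two elements in S_i and one in S_{i+1} (cyclically). Then every 4-element subset of {1,...,n} contains some element of G_1 ∪ G_2. -/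
open Finset

attribute [local instance] Classical.propDecidable

/-! Let `c_j = #(Q ∩ S_j)`, indices read cyclically, so that `c_1 + c_2 + c_3 = 4`. If some
`c_j ≥ 3`, three points of `Q ∩ S_j` form a member of `G_1`. Otherwise the counts are
`(2,2,0)`, `(2,1,1)` up to rotation, and there is always a `j` with `c_j = 2` and `c_{j+1} ≥ 1`
(in `(2,0,2)` take the second 2, whose successor is the first); those three points form a member
of `G_2`. -/

lemma mem_resClass3 {n i x : ℕ} : x ∈ resClass3 n i ↔ x ∈ Icc 1 n ∧ x % 3 = i % 3 :=
  mem_filter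

lemma resClass3_add_three (n i : ℕ) : resClass3 n (i + 3) = resClass3 n i := by
  simp only [resClass3, Nat.add_mod_right]

lemma inter_resClass3_of_subset {n : ℕ} {Q : Finset ℕ} (hQ : Q ⊆ Icc 1 n) (i : ℕ) :
    Q ∩ resClass3 n i = Q.filter (fun x => x % 3 = i % 3) := by
  ext x
  simp only [mem_inter, mem_filter, mem_resClass3]
  exact ⟨fun h => ⟨h.1, h.2.2⟩, fun h => ⟨h.1, hQ h.1, h.2⟩⟩

lemma card_inter_resClass3_sum {n : ℕ} {Q : Finset ℕ} (hQ : Q ⊆ Icc 1 n) :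
    #(Q ∩ resClass3 n 1) + #(Q ∩ resClass3 n 2) + #(Q ∩ resClass3 n 3) = #Q := by
  have hmaps : (Q : Set ℕ).MapsTo (· % 3) (range 3) :=
    fun x _ => mem_range.mpr (Nat.mod_lt x three_pos)
  rw [card_eq_sum_card_fiberwise hmaps]
  simp only [inter_resClass3_of_subset hQ, sum_range_succ, sum_range_zero, Nat.mod_self,
    Nat.one_mod, Nat.reduceMod]
  ring

lemma disjoint_resClass3_succ (n i : ℕ) :
    Disjoint (resClass3 n i) (resClass3 n (i + 1)) := by
  rw [disjoint_left]
  intro x hx hx'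
  rw [mem_resClass3] at hx hx'
  omega

lemma exists_mem_G1deg3_subset {n i : ℕ} {Q : Finset ℕ} (hQ : Q ⊆ Icc 1 n) (hi : i ∈ Icc 1 3)
    (h3 : 3 ≤ #(Q ∩ resClass3 n i)) : ∃ T ∈ G1deg3 n, T ⊆ Q := by
  obtain ⟨T, hT, hT3⟩ := exists_subset_card_eq h3
  have hTQ : T ⊆ Q := hT.trans inter_subset_left
  refine ⟨T, ?_, hTQ⟩
  simp only [G1deg3, mem_filter, mem_powersetCard]
  exact ⟨⟨hTQ.trans hQ, hT3⟩, i, hi, hT.trans inter_subset_right⟩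

lemma exists_mem_G2deg3_subset {n i : ℕ} {Q : Finset ℕ} (hQ : Q ⊆ Icc 1 n) (hi : i ∈ Icc 1 3)
    (h2 : #(Q ∩ resClass3 n i) = 2) (h1 : 0 < #(Q ∩ resClass3 n (i + 1))) :
    ∃ T ∈ G2deg3 n, T ⊆ Q := by
  obtain ⟨x, hx⟩ := card_pos.mp h1
  obtain ⟨hxQ, hxS⟩ := mem_inter.mp hx
  set A := Q ∩ resClass3 n i
  have hdisj := disjoint_resClass3_succ n i
  have hxA : x ∉ A := fun h => disjoint_left.mp hdisj (mem_inter.mp h).2 hxS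
  have hTQ : insert x A ⊆ Q := insert_subset hxQ inter_subset_left
  refine ⟨insert x A, ?_, hTQ⟩
  have hi2 : insert x A ∩ resClass3 n i = A := by
    rw [insert_inter_of_notMem (disjoint_left.mp hdisj.symm hxS), inter_assoc, inter_self]
  have hi1 : insert x A ∩ resClass3 n (i + 1) = {x} := by
    rw [insert_inter_of_mem hxS, inter_assoc, disjoint_iff_inter_eq_empty.mp hdisj,
      inter_empty, insert_empty]
  simp only [G2deg3, mem_filter, mem_powersetCard]
  refine ⟨⟨hTQ.trans hQ, by rw [card_insert_of_notMem hxA, h2]⟩, i, hi, ?_, ?_⟩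
  · rw [hi2, h2]
  · rw [hi1, card_singleton]

lemma exists_three_le_or_two_and_pos (c : ℕ → ℕ) (hsum : c 1 + c 2 + c 3 = 4) (hc : c 4 = c 1) :
    ∃ i ∈ Icc 1 3, 3 ≤ c i ∨ c i = 2 ∧ 0 < c (i + 1) := by
  by_contra h
  have h1 : ¬(3 ≤ c 1 ∨ c 1 = 2 ∧ 0 < c 2) := fun h' => h ⟨1, by simp, h'⟩
  have h2 : ¬(3 ≤ c 2 ∨ c 2 = 2 ∧ 0 < c 3) := fun h' => h ⟨2, by simp, h'⟩
  have h3 : ¬(3 ≤ c 3 ∨ c 3 = 2 ∧ 0 < c 4) := fun h' => h ⟨3, by simp, h'⟩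
  omega

theorem stmt16_general (n : ℕ) :
    ∀ Q ∈ (Finset.Icc 1 n).powersetCard 4, ∃ T ∈ G1deg3 n ∪ G2deg3 n, T ⊆ Q := by
  intro Q hQ
  obtain ⟨hQn, hQ4⟩ := mem_powersetCard.mp hQ
  obtain ⟨i, hi, hG1 | ⟨hG2, hnext⟩⟩ := exists_three_le_or_two_and_pos
    (fun j => #(Q ∩ resClass3 n j)) ((card_inter_resClass3_sum hQn).trans hQ4)
    (by simp only [resClass3_add_three n 1])
  · obtain ⟨T, hT, hTQ⟩ := exists_mem_G1deg3_subset hQn hi hG1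
    exact ⟨T, mem_union_left _ hT, hTQ⟩
  · obtain ⟨T, hT, hTQ⟩ := exists_mem_G2deg3_subset hQn hi hG2 hnext
    exact ⟨T, mem_union_right _ hT, hTQ⟩

/-- Upper perfectness for the degree-3 algorithm: for `n ≥ 9` with `3 ∣ n`, every
4-element subset of `{1,…,n}` contains some element of `G_1 ∪ G_2`. -/
theorem stmt16 (n : ℕ) (hn : 9 ≤ n) (h3 : 3 ∣ n) :
    ∀ Q ∈ (Finset.Icc 1 n).powersetCard 4, ∃ T ∈ G1deg3 n ∪ G2deg3 n, T ⊆ Q :=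
  stmt16_general n
end

section
/- Let n ≥ 16 with 4 | n, partition {1,...,n} into S_1,...,S_4 by residue mod 4. Let G_1 = {4-sets with two elements in S_i, one in S_{i+1}, one in S_{i+2}}, G_2 = {4-sets with two elements in S_i and two in S_j for i < j}, G_4 = {4-sets within one S_i} (indices cyclic mod 4). Then every 3-element subset of {1,...,n} is contained in some element of G_1 ∪ G_2 ∪ G_4. -/
open Finset

attribute [local instance] Classical.propDecidable

/-- `S_i ⊆ {1,…,n}`: the elements congruent to `i` mod 4. -/
noncomputable def resClass4 (n i : ℕ) : Finset ℕ :=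
  (Finset.Icc 1 n).filter (fun x => x % 4 = i % 4)

/-- `G_1`: 4-element subsets with two elements in `S_i`, one in `S_{i+1}` and one in
`S_{i+2}` (indices cyclic mod 4). -/
noncomputable def G1deg4 (n : ℕ) : Finset (Finset ℕ) :=
  ((Finset.Icc 1 n).powersetCard 4).filter (fun T => ∃ i ∈ Finset.Icc 1 4,
    (T ∩ resClass4 n i).card = 2 ∧ (T ∩ resClass4 n (i + 1)).card = 1 ∧
      (T ∩ resClass4 n (i + 2)).card = 1)

/-- `G_2`: 4-element subsets with two elements in `S_i` and two in `S_j`, `i < j`. -/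
noncomputable def G2deg4 (n : ℕ) : Finset (Finset ℕ) :=
  ((Finset.Icc 1 n).powersetCard 4).filter (fun T => ∃ i ∈ Finset.Icc 1 4,
    ∃ j ∈ Finset.Icc 1 4, i < j ∧
      (T ∩ resClass4 n i).card = 2 ∧ (T ∩ resClass4 n j).card = 2)

/-- `G_3`: 4-element subsets with three elements in `S_i` and one in `S_{i-1}`
(indices cyclic mod 4, so `S_{i-1} = S_{i+3}`). -/
noncomputable def G3deg4 (n : ℕ) : Finset (Finset ℕ) :=
  ((Finset.Icc 1 n).powersetCard 4).filter (fun T => ∃ i ∈ Finset.Icc 1 4,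
    (T ∩ resClass4 n i).card = 3 ∧ (T ∩ resClass4 n (i + 3)).card = 1)

/-- `G_4`: 4-element subsets contained in a single residue class mod 4. -/
noncomputable def G4deg4 (n : ℕ) : Finset (Finset ℕ) :=
  ((Finset.Icc 1 n).powersetCard 4).filter (fun T => ∃ i ∈ Finset.Icc 1 4,
    T ⊆ resClass4 n i)

lemma mem_resClass4' {n i x : ℕ} : x ∈ resClass4 n i ↔ (1 ≤ x ∧ x ≤ n) ∧ x % 4 = i % 4 := by
  simp [resClass4, Finset.mem_Icc]

lemma resClass4_subset' {n i : ℕ} : resClass4 n i ⊆ Finset.Icc 1 n := filter_subset _ _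

lemma card3_le' (a b c : ℕ) : ({a, b, c} : Finset ℕ).card ≤ 3 := by
  have h1 := card_insert_le a ({b, c} : Finset ℕ)
  have h2 := card_insert_le b ({c} : Finset ℕ)
  simp only [card_singleton] at *
  omega

lemma exists_new' (n : ℕ) (hn : 16 ≤ n) (i : ℕ) (F : Finset ℕ) (hF : F.card ≤ 3) :
    ∃ x ∈ resClass4 n i, x ∉ F := by
  by_contra h
  push_neg at h
  set e := if i % 4 = 0 then 4 else i % 4 with he
  have he4 : e % 4 = i % 4 ∧ 1 ≤ e ∧ e ≤ 4 := by
    by_cases h0 : i % 4 = 0 <;> simp [he, h0] <;> omega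
  have hsub : ({e, e + 4, e + 8, e + 12} : Finset ℕ) ⊆ F := by
    intro y hy
    apply h
    simp only [mem_insert, mem_singleton] at hy
    rw [mem_resClass4']
    omega
  have hcard : ({e, e + 4, e + 8, e + 12} : Finset ℕ).card = 4 := by
    rw [card_insert_of_notMem (by simp), card_insert_of_notMem (by simp),
      card_pair (by omega)]
  have := card_le_card hsub
  omega

lemma inter_resClass4' {n : ℕ} (T : Finset ℕ) (hT : T ⊆ Finset.Icc 1 n) (i : ℕ) :
    T ∩ resClass4 n i = T.filter (fun y => y % 4 = i % 4) := by
  ext y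
  simp only [mem_inter, mem_resClass4', mem_filter]
  constructor
  · rintro ⟨h1, _, h3⟩; exact ⟨h1, h3⟩
  · rintro ⟨h1, h2⟩
    have := hT h1
    rw [Finset.mem_Icc] at this
    exact ⟨h1, this, h2⟩

lemma rep4' (r : ℕ) (hr : r < 4) : ∃ i ∈ Finset.Icc 1 4, i % 4 = r := by
  rcases Nat.eq_zero_or_pos r with h | h
  · exact ⟨4, by simp, by omega⟩
  · exact ⟨r, by rw [Finset.mem_Icc]; omega, by omega⟩

lemma caseL4 (n : ℕ) (hn : 16 ≤ n) (a b c : ℕ) (hab : a ≠ b) (hac : a ≠ c) (hbc : b ≠ c)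
    (ha : a ∈ Finset.Icc 1 n) (hb : b ∈ Finset.Icc 1 n) (hc : c ∈ Finset.Icc 1 n)
    (h1 : a % 4 = b % 4) (h2 : a % 4 = c % 4) :
    ∃ T ∈ G1deg4 n ∪ G2deg4 n ∪ G4deg4 n, a ∈ T ∧ b ∈ T ∧ c ∈ T := by
  obtain ⟨i, hi, hi4⟩ := rep4' (a % 4) (Nat.mod_lt _ (by norm_num))
  obtain ⟨x, hx, hxF⟩ := exists_new' n hn i {a, b, c} (card3_le' a b c)
  rw [mem_resClass4'] at hx
  have hA := Finset.mem_Icc.mp ha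
  have hB := Finset.mem_Icc.mp hb
  have hC := Finset.mem_Icc.mp hc
  have hsub : insert x ({a, b, c} : Finset ℕ) ⊆ resClass4 n i := by
    intro y hy
    simp only [mem_insert, mem_singleton] at hy
    rw [mem_resClass4']
    omega
  have hcard : (insert x ({a, b, c} : Finset ℕ)).card = 4 := by
    rw [card_insert_of_notMem hxF, card_insert_of_notMem (by simp [hab, hac]),
      card_pair hbc]
  refine ⟨insert x {a, b, c}, ?_, by simp, by simp, by simp⟩
  rw [mem_union]
  right
  simp only [G4deg4, mem_filter, mem_powersetCard]
  exact ⟨⟨hsub.trans resClass4_subset', hcard⟩, i, hi, hsub⟩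

lemma caseL2 (n : ℕ) (hn : 16 ≤ n) (a b c : ℕ) (hab : a ≠ b) (hac : a ≠ c) (hbc : b ≠ c)
    (ha : a ∈ Finset.Icc 1 n) (hb : b ∈ Finset.Icc 1 n) (hc : c ∈ Finset.Icc 1 n)
    (h1 : a % 4 = b % 4) (h2 : a % 4 ≠ c % 4) :
    ∃ T ∈ G1deg4 n ∪ G2deg4 n ∪ G4deg4 n, a ∈ T ∧ b ∈ T ∧ c ∈ T := by
  obtain ⟨i, hi, hi4⟩ := rep4' (a % 4) (Nat.mod_lt _ (by norm_num))
  obtain ⟨j, hj, hj4⟩ := rep4' (c % 4) (Nat.mod_lt _ (by norm_num))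
  obtain ⟨x, hx, hxF⟩ := exists_new' n hn j {a, b, c} (card3_le' a b c)
  rw [mem_resClass4'] at hx
  have hA := Finset.mem_Icc.mp ha
  have hB := Finset.mem_Icc.mp hb
  have hC := Finset.mem_Icc.mp hc
  have hxc : x ≠ c := by intro h; exact hxF (by simp [h])
  have hTsub : insert x ({a, b, c} : Finset ℕ) ⊆ Finset.Icc 1 n := by
    intro y hy
    simp only [mem_insert, mem_singleton] at hy
    rw [Finset.mem_Icc]
    omega
  have hcard : (insert x ({a, b, c} : Finset ℕ)).card = 4 := by
    rw [card_insert_of_notMem hxF, card_insert_of_notMem (by simp [hab, hac]),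
      card_pair hbc]
  have hfi : (insert x ({a, b, c} : Finset ℕ)).filter (fun y => y % 4 = i % 4) = {a, b} := by
    ext y
    simp only [mem_filter, mem_insert, mem_singleton]
    omega
  have hfj : (insert x ({a, b, c} : Finset ℕ)).filter (fun y => y % 4 = j % 4) = {x, c} := by
    ext y
    simp only [mem_filter, mem_insert, mem_singleton]
    omega
  have hci : ((insert x ({a, b, c} : Finset ℕ)) ∩ resClass4 n i).card = 2 := by
    rw [inter_resClass4' _ hTsub, hfi, card_pair hab]
  have hcj : ((insert x ({a, b, c} : Finset ℕ)) ∩ resClass4 n j).card = 2 := by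
    rw [inter_resClass4' _ hTsub, hfj, card_pair hxc]
  refine ⟨insert x {a, b, c}, ?_, by simp, by simp, by simp⟩
  rw [mem_union]
  left
  rw [mem_union]
  right
  simp only [G2deg4, mem_filter, mem_powersetCard]
  refine ⟨⟨hTsub, hcard⟩, ?_⟩
  have hij : i ≠ j := by omega
  rcases lt_or_gt_of_ne hij with h | h
  · exact ⟨i, hi, j, hj, h, hci, hcj⟩
  · exact ⟨j, hj, i, hi, h, hcj, hci⟩

lemma caseL1 (n : ℕ) (hn : 16 ≤ n) (a b c : ℕ) (hab : a ≠ b) (hac : a ≠ c) (hbc : b ≠ c)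
    (ha : a ∈ Finset.Icc 1 n) (hb : b ∈ Finset.Icc 1 n) (hc : c ∈ Finset.Icc 1 n)
    (h1 : b % 4 = (a % 4 + 1) % 4) (h2 : c % 4 = (a % 4 + 2) % 4) :
    ∃ T ∈ G1deg4 n ∪ G2deg4 n ∪ G4deg4 n, a ∈ T ∧ b ∈ T ∧ c ∈ T := by
  obtain ⟨i, hi, hi4⟩ := rep4' (a % 4) (Nat.mod_lt _ (by norm_num))
  obtain ⟨x, hx, hxF⟩ := exists_new' n hn i {a, b, c} (card3_le' a b c)
  rw [mem_resClass4'] at hx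
  have hA := Finset.mem_Icc.mp ha
  have hB := Finset.mem_Icc.mp hb
  have hC := Finset.mem_Icc.mp hc
  have hxa : x ≠ a := by intro h; exact hxF (by simp [h])
  have hTsub : insert x ({a, b, c} : Finset ℕ) ⊆ Finset.Icc 1 n := by
    intro y hy
    simp only [mem_insert, mem_singleton] at hy
    rw [Finset.mem_Icc]
    omega
  have hcard : (insert x ({a, b, c} : Finset ℕ)).card = 4 := by
    rw [card_insert_of_notMem hxF, card_insert_of_notMem (by simp [hab, hac]),
      card_pair hbc]
  have hf0 : (insert x ({a, b, c} : Finset ℕ)).filter (fun y => y % 4 = i % 4) = {x, a} := by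
    ext y
    simp only [mem_filter, mem_insert, mem_singleton]
    omega
  have hf1 : (insert x ({a, b, c} : Finset ℕ)).filter (fun y => y % 4 = (i + 1) % 4) = {b} := by
    ext y
    simp only [mem_filter, mem_insert, mem_singleton]
    omega
  have hf2 : (insert x ({a, b, c} : Finset ℕ)).filter (fun y => y % 4 = (i + 2) % 4) = {c} := by
    ext y
    simp only [mem_filter, mem_insert, mem_singleton]
    omega
  have hc0 : ((insert x ({a, b, c} : Finset ℕ)) ∩ resClass4 n i).card = 2 := by
    rw [inter_resClass4' _ hTsub, hf0, card_pair hxa]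
  have hc1 : ((insert x ({a, b, c} : Finset ℕ)) ∩ resClass4 n (i + 1)).card = 1 := by
    rw [inter_resClass4' _ hTsub, hf1, card_singleton]
  have hc2 : ((insert x ({a, b, c} : Finset ℕ)) ∩ resClass4 n (i + 2)).card = 1 := by
    rw [inter_resClass4' _ hTsub, hf2, card_singleton]
  refine ⟨insert x {a, b, c}, ?_, by simp, by simp, by simp⟩
  rw [mem_union]
  left
  rw [mem_union]
  left
  simp only [G1deg4, mem_filter, mem_powersetCard]
  exact ⟨⟨hTsub, hcard⟩, i, hi, hc0, hc1, hc2⟩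


lemma cyc4' (ra rb rc : ℕ) (ha : ra < 4) (hb : rb < 4) (hc : rc < 4)
    (n1 : ra ≠ rb) (n2 : ra ≠ rc) (n3 : rb ≠ rc) :
    (rb = (ra + 1) % 4 ∧ rc = (ra + 2) % 4) ∨ (rc = (ra + 1) % 4 ∧ rb = (ra + 2) % 4) ∨
    (rc = (rb + 1) % 4 ∧ ra = (rb + 2) % 4) ∨ (ra = (rb + 1) % 4 ∧ rc = (rb + 2) % 4) ∨
    (ra = (rc + 1) % 4 ∧ rb = (rc + 2) % 4) ∨ (rb = (rc + 1) % 4 ∧ ra = (rc + 2) % 4) := by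
  interval_cases ra <;> interval_cases rb <;> interval_cases rc <;> omega

set_option maxHeartbeats 2000000 in
/-- Lower perfectness for the degree-4 algorithm: for `n ≥ 16` with `4 ∣ n`, every
3-element subset of `{1,…,n}` is contained in some element of `G_1 ∪ G_2 ∪ G_4`. -/
theorem stmt18 (n : ℕ) (hn : 16 ≤ n) (h4 : 4 ∣ n) :
    ∀ P ∈ (Finset.Icc 1 n).powersetCard 3,
      ∃ T ∈ G1deg4 n ∪ G2deg4 n ∪ G4deg4 n, P ⊆ T := by
  intro P hP
  rw [mem_powersetCard] at hP
  obtain ⟨hPs, hPc⟩ := hP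
  obtain ⟨a, b, c, hab, hac, hbc, rfl⟩ := card_eq_three.mp hPc
  have ha : a ∈ Finset.Icc 1 n := hPs (by simp)
  have hb : b ∈ Finset.Icc 1 n := hPs (by simp)
  have hc : c ∈ Finset.Icc 1 n := hPs (by simp)
  have key : ∃ T ∈ G1deg4 n ∪ G2deg4 n ∪ G4deg4 n, a ∈ T ∧ b ∈ T ∧ c ∈ T := by
    by_cases e1 : a % 4 = b % 4
    · by_cases e2 : a % 4 = c % 4
      · exact caseL4 n hn a b c hab hac hbc ha hb hc e1 e2
      · exact caseL2 n hn a b c hab hac hbc ha hb hc e1 e2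
    · by_cases e2 : a % 4 = c % 4
      · obtain ⟨T, h, h1, h2, h3⟩ :=
          caseL2 n hn a c b hac hab hbc.symm ha hc hb e2 e1
        exact ⟨T, h, h1, h3, h2⟩
      · by_cases e3 : b % 4 = c % 4
        · obtain ⟨T, h, h1, h2, h3⟩ :=
            caseL2 n hn b c a hbc hab.symm hac.symm hb hc ha e3 (fun h => e1 h.symm)
          exact ⟨T, h, h3, h1, h2⟩
        · have h6 := cyc4' (a % 4) (b % 4) (c % 4) (Nat.mod_lt _ (by norm_num))
            (Nat.mod_lt _ (by norm_num)) (Nat.mod_lt _ (by norm_num)) e1 e2 e3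
          rcases h6 with ⟨p, q⟩ | ⟨p, q⟩ | ⟨p, q⟩ | ⟨p, q⟩ | ⟨p, q⟩ | ⟨p, q⟩
          · exact caseL1 n hn a b c hab hac hbc ha hb hc p q
          · obtain ⟨T, h, h1, h2, h3⟩ :=
              caseL1 n hn a c b hac hab hbc.symm ha hc hb p q
            exact ⟨T, h, h1, h3, h2⟩
          · obtain ⟨T, h, h1, h2, h3⟩ :=
              caseL1 n hn b c a hbc hab.symm hac.symm hb hc ha p q
            exact ⟨T, h, h3, h1, h2⟩
          · obtain ⟨T, h, h1, h2, h3⟩ :=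
              caseL1 n hn b a c hab.symm hbc hac hb ha hc p q
            exact ⟨T, h, h2, h1, h3⟩
          · obtain ⟨T, h, h1, h2, h3⟩ :=
              caseL1 n hn c a b hac.symm hbc.symm hab hc ha hb p q
            exact ⟨T, h, h2, h3, h1⟩
          · obtain ⟨T, h, h1, h2, h3⟩ :=
              caseL1 n hn c b a hbc.symm hac.symm hab.symm hc hb ha p q
            exact ⟨T, h, h3, h2, h1⟩
  obtain ⟨T, hT, h1, h2, h3⟩ := key
  exact ⟨T, hT, by simp [insert_subset_iff, h1, h2, h3]⟩
end

section
/- Let n ≥ 16 with 4 | n, partition {1,...,n} into S_1,...,S_4 by residue mod 4, and let G_1, G_2, G_3, G_4 be as in the degree-4 algorithm: G_1 = 4-sets of shape (2 in S_i, 1 in S_{i+1}, 1 in S_{i+2}); G_2 = 4-sets of shape (2 in S_i, 2 in S_j), i < j; G_3 = 4-sets of shape (3 in S_i, 1 in S_{i-1}); G_4 = 4-sets within one S_i (indices cyclic mod 4). Then every 5-element subset of {1,...,n} contains some element of G_1 ∪ G_2 ∪ G_3 ∪ G_4. -/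
/-!
Let `(a, b, c, d)` count the points of a `5`-set `Q` in the residue classes `r, r+1, r+2, r+3`
(mod 4), where `r` is a most populated class. Since `a + b + c + d = 5` and `a` is maximal, either
`a ≥ 4` (a `G_4` set), or `a = 3, d ≥ 1` (`G_3`), or `a ≥ 2` and another class holds two points
(`G_2`), or else `b, c ≥ 1` (`G_1`). A subset of `Q` with the required counts is then picked
class by class.
-/

open Finset

attribute [local instance] Classical.propDecidable

theorem Finset.exists_subset_card_filter_eq {α β : Type*} [Fintype β] [DecidableEq β]
    {s : Finset α} {f : α → β} {k : β → ℕ} (hk : ∀ b, k b ≤ #{a ∈ s | f a = b}) :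
    ∃ t ⊆ s, ∀ b, #{a ∈ t | f a = b} = k b := by
  choose u hus hu using fun b => exists_subset_card_eq (hk b)
  have hfu : ∀ b, ∀ a ∈ u b, f a = b := fun b a ha => (mem_filter.1 (hus b ha)).2
  refine ⟨univ.biUnion u, biUnion_subset.2 fun b _ => (hus b).trans (filter_subset _ _),
    fun b => ?_⟩
  suffices {a ∈ univ.biUnion u | f a = b} = u b by rw [this, hu]
  ext a
  simp only [mem_filter, mem_biUnion, mem_univ, true_and]
  constructor
  · rintro ⟨⟨b', ha⟩, rfl⟩
    rwa [hfu b' a ha]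
  · exact fun ha => ⟨⟨b, ha⟩, hfu b a ha⟩

lemma ZMod.forall_four {P : ZMod 4 → Prop} : (∀ j, P j) ↔ P 0 ∧ P 1 ∧ P 2 ∧ P 3 :=
  ⟨fun h => ⟨h 0, h 1, h 2, h 3⟩, fun ⟨h0, h1, h2, h3⟩ j => by fin_cases j <;> assumption⟩

lemma ZMod.sum_four {M : Type*} [AddCommMonoid M] (g : ZMod 4 → M) :
    ∑ j, g j = g 0 + g 1 + g 2 + g 3 :=
  Fin.sum_univ_four g

/-- The size of `T ∩ S_r`, with classes indexed by `ZMod 4` so that cyclic index shifts are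
additions. -/
noncomputable def resCount (T : Finset ℕ) (r : ZMod 4) : ℕ :=
  #(T.filter fun x : ℕ => (x : ZMod 4) = r)

lemma sum_resCount (T : Finset ℕ) : ∑ r, resCount T r = #T :=
  (card_eq_sum_card_fiberwise (f := fun x : ℕ => (x : ZMod 4)) fun _ _ =>
    mem_coe.2 (mem_univ _)).symm

lemma sum_resCount_add_left (T : Finset ℕ) (r : ZMod 4) : ∑ j, resCount T (r + j) = #T :=
  (Equiv.sum_comp (Equiv.addLeft r) _).trans (sum_resCount T)

lemma exists_mem_Icc_natCast_eq (r : ZMod 4) : ∃ i ∈ Icc (1 : ℕ) 4, (i : ZMod 4) = r := by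
  revert r
  decide

lemma card_inter_resClass4 {n : ℕ} {T : Finset ℕ} (hT : T ⊆ Icc 1 n) (i : ℕ) :
    #(T ∩ resClass4 n i) = resCount T i := by
  unfold resCount
  congr 1
  ext x
  simp only [resClass4, mem_inter, mem_filter, ZMod.natCast_eq_natCast_iff']
  exact ⟨fun ⟨hx, _, h⟩ => ⟨hx, h⟩, fun ⟨hx, h⟩ => ⟨hx, hT hx, h⟩⟩

lemma exists_subset_resCount_eq {Q : Finset ℕ} {r : ZMod 4} {pat : ZMod 4 → ℕ}
    (h : ∀ j, pat j ≤ resCount Q (r + j)) :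
    ∃ T ⊆ Q, #T = ∑ j, pat j ∧ ∀ j, resCount T (r + j) = pat j := by
  obtain ⟨T, hTQ, hT⟩ := exists_subset_card_filter_eq (s := Q) (f := fun x : ℕ => (x : ZMod 4))
    (k := fun b => pat (b - r)) fun b => by simpa [resCount] using h (b - r)
  have hres : ∀ j, resCount T (r + j) = pat j := fun j => by simpa [resCount] using hT (r + j)
  refine ⟨T, hTQ, ?_, hres⟩
  rw [← sum_resCount_add_left T r]
  exact sum_congr rfl fun j _ => hres j

lemma card_eq_resCount_add_four (T : Finset ℕ) (r : ZMod 4) :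
    #T = resCount T r + resCount T (r + 1) + resCount T (r + 2) + resCount T (r + 3) := by
  rw [← sum_resCount_add_left T r, ZMod.sum_four, add_zero]

section

variable {n : ℕ} {Q : Finset ℕ} {r : ZMod 4}

lemma exists_G1deg4_subset (hQ : Q ⊆ Icc 1 n) (h0 : 2 ≤ resCount Q r)
    (h1 : 1 ≤ resCount Q (r + 1)) (h2 : 1 ≤ resCount Q (r + 2)) :
    ∃ T ∈ G1deg4 n, T ⊆ Q := by
  obtain ⟨T, hTQ, hcard, hc⟩ := exists_subset_resCount_eq (pat := ![2, 1, 1, 0])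
    (ZMod.forall_four.2 ⟨by simpa using h0, by simpa using h1, by simpa using h2, by simp⟩)
  have hT := hTQ.trans hQ
  obtain ⟨i, hi, rfl⟩ := exists_mem_Icc_natCast_eq r
  refine ⟨T, ?_, hTQ⟩
  simp only [G1deg4, mem_filter, mem_powersetCard]
  refine ⟨⟨hT, hcard.trans (by decide)⟩, i, hi, ?_⟩
  simp only [card_inter_resClass4 hT, Nat.cast_add, Nat.cast_one, Nat.cast_ofNat]
  exact ⟨by simpa using hc 0, hc 1, hc 2⟩

lemma exists_G2deg4_subset {j : ZMod 4} (hQ : Q ⊆ Icc 1 n) (hj : j ≠ 0)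
    (h0 : 2 ≤ resCount Q r) (h1 : 2 ≤ resCount Q (r + j)) :
    ∃ T ∈ G2deg4 n, T ⊆ Q := by
  obtain ⟨T, hTQ, hcard, hc⟩ := exists_subset_resCount_eq (Q := Q) (r := r)
    (pat := Pi.single 0 2 + Pi.single j 2) fun k => by
      rcases eq_or_ne k 0 with rfl | hk0
      · simpa [hj.symm] using h0
      rcases eq_or_ne k j with rfl | hkj
      · simpa [hk0] using h1
      · simp [hk0, hkj]
  have hT := hTQ.trans hQ
  have hcr : resCount T r = 2 := by simpa [hj.symm] using hc 0
  have hcs : resCount T (r + j) = 2 := by simpa [hj] using hc j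
  obtain ⟨i, hi, rfl⟩ := exists_mem_Icc_natCast_eq r
  obtain ⟨i', hi', hi'j⟩ := exists_mem_Icc_natCast_eq (i + j)
  rw [← card_inter_resClass4 hT] at hcr
  rw [← hi'j, ← card_inter_resClass4 hT] at hcs
  refine ⟨T, ?_, hTQ⟩
  simp only [G2deg4, mem_filter, mem_powersetCard]
  refine ⟨⟨hT, by simpa [sum_add_distrib] using hcard⟩, ?_⟩
  have hii' : i ≠ i' := by
    rintro rfl
    exact hj (by simpa using hi'j)
  rcases hii'.lt_or_gt with h | h
  · exact ⟨i, hi, i', hi', h, hcr, hcs⟩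
  · exact ⟨i', hi', i, hi, h, hcs, hcr⟩

lemma exists_G3deg4_subset (hQ : Q ⊆ Icc 1 n) (h0 : 3 ≤ resCount Q r)
    (h3 : 1 ≤ resCount Q (r + 3)) :
    ∃ T ∈ G3deg4 n, T ⊆ Q := by
  obtain ⟨T, hTQ, hcard, hc⟩ := exists_subset_resCount_eq (pat := ![3, 0, 0, 1])
    (ZMod.forall_four.2 ⟨by simpa using h0, by simp, by simp, by simpa using h3⟩)
  have hT := hTQ.trans hQ
  obtain ⟨i, hi, rfl⟩ := exists_mem_Icc_natCast_eq r
  refine ⟨T, ?_, hTQ⟩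
  simp only [G3deg4, mem_filter, mem_powersetCard]
  refine ⟨⟨hT, hcard.trans (by decide)⟩, i, hi, ?_⟩
  simp only [card_inter_resClass4 hT, Nat.cast_add, Nat.cast_ofNat]
  exact ⟨by simpa using hc 0, hc 3⟩

lemma exists_G4deg4_subset (hQ : Q ⊆ Icc 1 n) (h : 4 ≤ resCount Q r) :
    ∃ T ∈ G4deg4 n, T ⊆ Q := by
  obtain ⟨T, hTQ, hcard, hc⟩ := exists_subset_resCount_eq (pat := ![4, 0, 0, 0])
    (ZMod.forall_four.2 ⟨by simpa using h, by simp, by simp, by simp⟩)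
  have hT := hTQ.trans hQ
  obtain ⟨i, hi, rfl⟩ := exists_mem_Icc_natCast_eq r
  refine ⟨T, ?_, hTQ⟩
  simp only [G4deg4, mem_filter, mem_powersetCard]
  refine ⟨⟨hT, hcard.trans (by decide)⟩, i, hi, ?_⟩
  refine inter_eq_left.1 (eq_of_subset_of_card_le inter_subset_left ?_)
  have hc0 : resCount T i = 4 := by simpa using hc 0
  rw [card_inter_resClass4 hT, hc0, hcard]
  decide

end

lemma shape_cases_of_add_eq_five {a b c d : ℕ} (h : a + b + c + d = 5) (hb : b ≤ a)
    (hc : c ≤ a) (hd : d ≤ a) :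
    4 ≤ a ∨ (3 ≤ a ∧ 1 ≤ d) ∨ (2 ≤ a ∧ 2 ≤ b) ∨ (2 ≤ a ∧ 2 ≤ c) ∨ (2 ≤ a ∧ 2 ≤ d) ∨
      (2 ≤ a ∧ 1 ≤ b ∧ 1 ≤ c) := by
  omega

theorem stmt19_general (n : ℕ) :
    ∀ Q ∈ (Finset.Icc 1 n).powersetCard 5,
      ∃ T ∈ G1deg4 n ∪ G2deg4 n ∪ G3deg4 n ∪ G4deg4 n, T ⊆ Q := by
  intro Q hQ
  obtain ⟨hQn, hQ5⟩ := mem_powersetCard.1 hQ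
  obtain ⟨r, -, hr⟩ := exists_max_image univ (resCount Q) univ_nonempty
  simp only [mem_union, or_and_right, exists_or]
  rcases shape_cases_of_add_eq_five ((card_eq_resCount_add_four Q r).symm.trans hQ5)
    (hr _ (mem_univ _)) (hr _ (mem_univ _)) (hr _ (mem_univ _)) with
    h4 | ⟨h3, h1⟩ | ⟨h2, h2'⟩ | ⟨h2, h2'⟩ | ⟨h2, h2'⟩ | ⟨h2, h1, h1'⟩
  · exact .inr (exists_G4deg4_subset hQn h4)
  · exact .inl (.inr (exists_G3deg4_subset hQn h3 h1))
  · exact .inl (.inl (.inr (exists_G2deg4_subset hQn (by decide) h2 h2')))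
  · exact .inl (.inl (.inr (exists_G2deg4_subset hQn (by decide) h2 h2')))
  · exact .inl (.inl (.inr (exists_G2deg4_subset hQn (by decide) h2 h2')))
  · exact .inl (.inl (.inl (exists_G1deg4_subset hQn h2 h1 h1')))

/-- Upper perfectness for the degree-4 algorithm: for `n ≥ 16` with `4 ∣ n`, every
5-element subset of `{1,…,n}` contains some element of `G_1 ∪ G_2 ∪ G_3 ∪ G_4`. -/
theorem stmt19 (n : ℕ) (hn : 16 ≤ n) (h4 : 4 ∣ n) :
    ∀ Q ∈ (Finset.Icc 1 n).powersetCard 5,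
      ∃ T ∈ G1deg4 n ∪ G2deg4 n ∪ G3deg4 n ∪ G4deg4 n, T ⊆ Q :=
  stmt19_general n
end
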